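/- Define ξ_0 = 0 and ξ_n = Σ_{i=1}^n i^i for n ≥ 1, and define φ : ℝ → ℝ by φ(x) = −1 for x < 0 and φ(x) = −1/n^n for x ∈ [ξ_{n−1}, ξ_n) with n ≥ 1. Let Φ(x) = ∫_0^x φ(x') dx'. Then Φ is a strictly decreasing 1-Lipschitz convex function, and Φ(ξ_n) = −n for every n ≥ 0. -/

import Mathlib

/-- `ξ_n = Σ_{i=1}^n i^i` (with `ξ_0 = 0`). -/
noncomputable def xiSeq (n : ℕ) : ℝ := ∑ i ∈ Finset.Icc 1 n, (i : ℝ) ^ i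

/-- For `x ≥ 0`, the unique `n ≥ 1` with `ξ_{n−1} ≤ x < ξ_n` (the least `n ≥ 1` such
that `x < ξ_n`). -/
noncomputable def stepIdx (x : ℝ) : ℕ := sInf {n : ℕ | 1 ≤ n ∧ x < xiSeq n}

/-- The step function `φ`: `φ(x) = −1` for `x < 0`, and `φ(x) = −1/n^n` on
`[ξ_{n−1}, ξ_n)` for `n ≥ 1`. -/
noncomputable def phiStep (x : ℝ) : ℝ :=
  if x < 0 then -1 else -(1 / (stepIdx x : ℝ) ^ (stepIdx x))

/-- `Φ(x) = ∫_0^x φ(x') dx'`. -/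
noncomputable def PhiFn (x : ℝ) : ℝ := ∫ t in (0 : ℝ)..x, phiStep t


lemma xiSeq_zero : xiSeq 0 = 0 := by simp [xiSeq]

lemma xiSeq_succ (n : ℕ) : xiSeq (n + 1) = xiSeq n + ((n:ℝ)+1) ^ (n+1) := by
  rw [xiSeq, Finset.sum_Icc_succ_top (by omega : 1 ≤ n + 1)]
  push_cast [xiSeq]; ring

lemma xiSeq_strictMono : StrictMono xiSeq := by
  apply strictMono_nat_of_lt_succ
  intro n
  rw [xiSeq_succ]
  nlinarith [pow_pos (by positivity : (0:ℝ) < (n:ℝ)+1) (n+1)]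

lemma xiSeq_nonneg (n : ℕ) : 0 ≤ xiSeq n := by
  rw [← xiSeq_zero]; exact (xiSeq_strictMono.monotone (Nat.zero_le n))

lemma le_xiSeq (n : ℕ) : (n : ℝ) ≤ xiSeq n := by
  induction n with
  | zero => simp [xiSeq_zero]
  | succ n ih =>
    rw [xiSeq_succ]
    have : (1:ℝ) ≤ ((n:ℝ)+1) ^ (n+1) := one_le_pow₀ (by linarith [Nat.cast_nonneg (α := ℝ) n])
    push_cast; linarith

lemma stepIdx_set_nonempty (x : ℝ) : {n : ℕ | 1 ≤ n ∧ x < xiSeq n}.Nonempty := by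
  obtain ⟨n, hn⟩ := exists_nat_gt x
  exact ⟨n + 1, by omega, lt_of_lt_of_le (by push_cast; linarith) (le_xiSeq (n+1))⟩

lemma stepIdx_mem (x : ℝ) : stepIdx x ∈ {n : ℕ | 1 ≤ n ∧ x < xiSeq n} :=
  Nat.sInf_mem (stepIdx_set_nonempty x)

lemma one_le_stepIdx (x : ℝ) : 1 ≤ stepIdx x := (stepIdx_mem x).1

lemma lt_xiSeq_stepIdx (x : ℝ) : x < xiSeq (stepIdx x) := (stepIdx_mem x).2

lemma xiSeq_pred_le (x : ℝ) (hx : 0 ≤ x) : xiSeq (stepIdx x - 1) ≤ x := by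
  by_contra h
  push_neg at h
  rcases Nat.lt_or_ge 1 (stepIdx x) with h1 | h1
  · have : stepIdx x ≤ stepIdx x - 1 :=
      Nat.sInf_le ⟨by omega, h⟩
    omega
  · have h0 : stepIdx x - 1 = 0 := by omega
    rw [h0, xiSeq_zero] at h; linarith

lemma stepIdx_eq (n : ℕ) (hn : 1 ≤ n) (x : ℝ) (h1 : xiSeq (n-1) ≤ x) (h2 : x < xiSeq n) :
    stepIdx x = n := by
  refine le_antisymm (Nat.sInf_le ⟨hn, h2⟩) (le_csInf (stepIdx_set_nonempty x) ?_)
  rintro m ⟨hm1, hm2⟩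
  by_contra h
  push_neg at h
  have : xiSeq m ≤ xiSeq (n-1) := xiSeq_strictMono.monotone (by omega)
  linarith

lemma stepIdx_mono : Monotone stepIdx := by
  intro x y hxy
  exact le_csInf (stepIdx_set_nonempty y) fun m hm => Nat.sInf_le ⟨hm.1, lt_of_le_of_lt hxy hm.2⟩

lemma natpow_mono {m n : ℕ} (h1 : 1 ≤ m) (h : m ≤ n) : (m:ℝ)^m ≤ (n:ℝ)^n := by
  calc (m:ℝ)^m ≤ (n:ℝ)^m := by
        apply pow_le_pow_left₀ (by positivity) (by exact_mod_cast h)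
    _ ≤ (n:ℝ)^n := by
        apply pow_le_pow_right₀ (by exact_mod_cast le_trans h1 h) h

lemma phiStep_mono : Monotone phiStep := by
  intro x y hxy
  unfold phiStep
  rcases lt_or_ge y 0 with hy | hy
  · rw [if_pos (lt_of_le_of_lt hxy hy), if_pos hy]
  · rw [if_neg (not_lt.mpr hy)]
    rcases lt_or_ge x 0 with hx | hx
    · rw [if_pos hx]
      have h1 : (1:ℝ) ≤ (stepIdx y : ℝ) ^ (stepIdx y) := by
        have := one_le_stepIdx y
        exact one_le_pow₀ (by exact_mod_cast this)
      have : 1 / (stepIdx y : ℝ) ^ (stepIdx y) ≤ 1 := by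
        rw [div_le_one (by linarith)]; linarith
      linarith
    · rw [if_neg (not_lt.mpr hx)]
      have hm := stepIdx_mono hxy
      have h1 := one_le_stepIdx x
      have hle := natpow_mono h1 hm
      have hpos : (0:ℝ) < (stepIdx x : ℝ)^(stepIdx x) := by positivity
      have : 1 / (stepIdx y : ℝ) ^ (stepIdx y) ≤ 1 / (stepIdx x : ℝ) ^ (stepIdx x) :=
        one_div_le_one_div_of_le hpos hle
      linarith

lemma phiStep_neg (x : ℝ) : phiStep x < 0 := by
  unfold phiStep
  split
  · norm_num
  · have h1 := one_le_stepIdx x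
    have : (0:ℝ) < (stepIdx x : ℝ)^(stepIdx x) := by positivity
    simp only [neg_lt, neg_zero]
    positivity

lemma neg_one_le_phiStep (x : ℝ) : -1 ≤ phiStep x := by
  unfold phiStep
  split
  · exact le_refl _
  · have h1 : (1:ℝ) ≤ (stepIdx x : ℝ) ^ (stepIdx x) :=
      one_le_pow₀ (by exact_mod_cast one_le_stepIdx x)
    have : 1 / (stepIdx x : ℝ) ^ (stepIdx x) ≤ 1 := by
      rw [div_le_one (by linarith)]; linarith
    linarith

lemma phiStep_integrable (a b : ℝ) : IntervalIntegrable phiStep MeasureTheory.volume a b :=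
  phiStep_mono.intervalIntegrable

lemma PhiFn_add (a b : ℝ) : PhiFn b = PhiFn a + ∫ t in a..b, phiStep t := by
  rw [PhiFn, PhiFn, intervalIntegral.integral_add_adjacent_intervals
    (phiStep_integrable 0 a) (phiStep_integrable a b)]

lemma integral_le (a b : ℝ) (hab : a ≤ b) :
    ∫ t in a..b, phiStep t ≤ (b - a) * phiStep b := by
  have := intervalIntegral.integral_mono_on hab (phiStep_integrable a b)
    (intervalIntegrable_const) (fun t ht => phiStep_mono ht.2)
  simpa using this

lemma le_integral (a b : ℝ) (hab : a ≤ b) :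
    (b - a) * phiStep a ≤ ∫ t in a..b, phiStep t := by
  have := intervalIntegral.integral_mono_on hab (intervalIntegrable_const)
    (phiStep_integrable a b) (fun t ht => phiStep_mono ht.1)
  simpa using this

/-- `Φ` is a strictly decreasing `1`-Lipschitz convex function, and
`Φ(ξ_n) = −n` for every `n ≥ 0`. -/
theorem PhiFn_properties :
    StrictAnti PhiFn ∧ LipschitzWith 1 PhiFn ∧ ConvexOn ℝ Set.univ PhiFn ∧
      ∀ n : ℕ, PhiFn (xiSeq n) = -(n : ℝ) := by
  refine ⟨?_, ?_, ?_, ?_⟩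
  · intro x y hxy
    rw [PhiFn_add x y]
    have h1 := integral_le x y hxy.le
    have h2 := phiStep_neg y
    nlinarith
  · apply LipschitzWith.of_dist_le_mul
    intro x y
    rw [Real.dist_eq, Real.dist_eq, PhiFn_add y x, NNReal.coe_one, one_mul]
    simp only [add_sub_cancel_left]
    have : ‖∫ t in y..x, phiStep t‖ ≤ 1 * |x - y| := by
      apply intervalIntegral.norm_integral_le_of_norm_le_const
      intro t _ined
      rw [Real.norm_eq_abs, abs_le]
      exact ⟨neg_one_le_phiStep t, (phiStep_neg t).le.trans (by norm_num)⟩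
    simpa [Real.norm_eq_abs] using this
  · apply convexOn_of_slope_mono_adjacent convex_univ
    intro x y z _ _ hxy hyz
    have h1 : PhiFn y - PhiFn x ≤ (y - x) * phiStep y := by
      rw [PhiFn_add x y]; simpa using integral_le x y hxy.le
    have h2 : (z - y) * phiStep y ≤ PhiFn z - PhiFn y := by
      rw [PhiFn_add y z]; simpa using le_integral y z hyz.le
    rw [div_le_div_iff₀ (by linarith) (by linarith)]
    nlinarith
  · intro n
    induction n with
    | zero => simp [PhiFn, xiSeq_zero]
    | succ n ih =>
      rw [PhiFn_add (xiSeq n) (xiSeq (n+1)), ih]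
      have key : ∫ t in (xiSeq n)..(xiSeq (n+1)), phiStep t = -1 := by
        have hle : xiSeq n ≤ xiSeq (n+1) := (xiSeq_strictMono (by omega)).le
        have hc : ∫ t in (xiSeq n)..(xiSeq (n+1)), phiStep t
            = ∫ t in (xiSeq n)..(xiSeq (n+1)), (-(1 / ((n:ℝ)+1) ^ (n+1)) : ℝ) := by
          apply intervalIntegral.integral_congr_ae
          rw [MeasureTheory.ae_iff]
          refine MeasureTheory.measure_mono_null ?_
            (MeasureTheory.measure_singleton (xiSeq (n+1)))
          · intro t ht
            simp only [Set.mem_setOf_eq, Classical.not_imp] at ht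
            obtain ⟨ht1, ht2⟩ := ht
            rw [Set.uIoc_of_le hle] at ht1
            by_contra hne
            have htlt : t < xiSeq (n+1) := lt_of_le_of_ne ht1.2 (by simpa using hne)
            have ht0 : 0 ≤ t := le_trans (xiSeq_nonneg n) ht1.1.le
            have hidx : stepIdx t = n + 1 :=
              stepIdx_eq (n+1) (by omega) t (by simpa using ht1.1.le) htlt
            apply ht2
            rw [phiStep, if_neg (not_lt.mpr ht0), hidx]
            push_cast
            ring
        rw [hc, intervalIntegral.integral_const, smul_eq_mul, xiSeq_succ]
        have hpos : (0:ℝ) < ((n:ℝ)+1) ^ (n+1) := by positivity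
        field_simp
        ring
      rw [key]; push_cast; ring
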